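/- arXiv:1708.01854 — 2 statements merged into one kernel-verified Lean document; each statement's English description precedes it below -/
import Mathlib

section
/- Let q be a prime, r and n positive integers, F_{q^r} the field with q^r elements carrying the trivial action of the cyclic group C_n, and set m := gcd(q^r − 1, n). Then the quotient of ℤ/mℤ by the equivalence relation a ∼ b iff there exists an integer j with gcd(j, n) = 1 and b ≡ j·a (mod m), is in bijection with the set of positive divisors of m. Consequently, the orbits of the pullback action of Aut(C_n) on H²(C_n, F_{q^r}^*) (trivial action) are in one-to-one correspondence with the set of positive divisors of gcd(q^r − 1, n). -/
def IsTwoCocycle {G F : Type*} [Group G] [Field F] (η : G →* RingAut F)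
    (f : G → G → Fˣ) : Prop :=
  ∀ g h k : G, η g (f h k : F) * ((f g (h * k) : Fˣ) : F) =
    ((f g h : Fˣ) : F) * ((f (g * h) k : Fˣ) : F)

def IsTwoCoboundary {G F : Type*} [Group G] [Field F] (η : G →* RingAut F)
    (f : G → G → Fˣ) : Prop :=
  ∃ r : G → Fˣ, ∀ g h : G,
    (f g h : F) = (r g : F) * η g (r h : F) * (((r (g * h))⁻¹ : Fˣ) : F)

def Cohomologous {G F : Type*} [Group G] [Field F] (η : G →* RingAut F)
    (f₁ f₂ : G → G → Fˣ) : Prop :=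
  IsTwoCoboundary η fun g h => f₁ g h * (f₂ g h)⁻¹

/-- The group of 2-cocycles, as a subgroup of all functions `G → G → Fˣ`. -/
def twoCocycles {G F : Type*} [Group G] [Field F] (η : G →* RingAut F) :
    Subgroup (G → G → Fˣ) where
  carrier := {f | IsTwoCocycle η f}
  one_mem' := by intro g h k; simp
  mul_mem' := by
    intro a b ha hb g h k
    simp only [Pi.mul_apply, Units.val_mul, map_mul]
    rw [mul_mul_mul_comm, ha g h k, hb g h k, mul_mul_mul_comm]
  inv_mem' := by
    intro a ha g h k
    simp only [Pi.inv_apply, Units.val_inv_eq_inv_val, map_inv₀]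
    rw [← mul_inv, ← mul_inv, ha g h k]

/-- The group of 2-coboundaries, as a subgroup of all functions `G → G → Fˣ`. -/
def twoCoboundaries {G F : Type*} [Group G] [Field F] (η : G →* RingAut F) :
    Subgroup (G → G → Fˣ) where
  carrier := {f | IsTwoCoboundary η f}
  one_mem' := ⟨1, by intro g h; simp⟩
  mul_mem' := by
    rintro a b ⟨r, hr⟩ ⟨t, ht⟩
    refine ⟨r * t, fun g h => ?_⟩
    simp only [Pi.mul_apply, Units.val_mul, map_mul, mul_inv, hr g h, ht g h,
      Units.val_inv_eq_inv_val]
    ring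
  inv_mem' := by
    rintro a ⟨r, hr⟩
    refine ⟨r⁻¹, fun g h => ?_⟩
    simp only [Pi.inv_apply, Units.val_inv_eq_inv_val, map_inv₀, hr g h, inv_inv, mul_inv]

/-- The second cohomology group `H²_η(G, F^*)`: 2-cocycles modulo 2-coboundaries. -/
abbrev H2 {G F : Type*} [Group G] [Field F] (η : G →* RingAut F) :=
  twoCocycles η ⧸ ((twoCoboundaries η).subgroupOf (twoCocycles η))

/-- The norm map `x ↦ ∏_{i=0}^{n-1} σ^i(x)` on `F^*`. -/
def cyclicNormHom {G F : Type*} [Group G] [Field F] (η : G →* RingAut F) (σ : G) (n : ℕ) :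
    Fˣ →* Fˣ where
  toFun x := ∏ i ∈ Finset.range n, Units.map (η (σ ^ i)).toMonoidHom x
  map_one' := by simp
  map_mul' x y := by simp [Finset.prod_mul_distrib]

/-- The subgroup `(F^*)^{C_n}` of elements of `F^*` fixed by the action. -/
def fixedUnits {G F : Type*} [Group G] [Field F] (η : G →* RingAut F) :
    Subgroup Fˣ where
  carrier := {x | ∀ g : G, η g (x : F) = (x : F)}
  one_mem' := by intro g; simp
  mul_mem' := by intro a b ha hb g; simp [ha g, hb g]
  inv_mem' := by intro a ha g; simp [ha g]

/-- The orbit relation on `H²(G, F^*)` induced by the pullback action of `Aut(G)`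
(here stated for an arbitrary action `η`; pullbacks are taken along `η`-compatible
automorphisms, which for the trivial action means all automorphisms). -/
def pullbackRel {G F : Type*} [Group G] [Field F] (η : G →* RingAut F)
    (c₁ c₂ : H2 η) : Prop :=
  ∃ ψ : MulAut G, (∀ g : G, η (ψ g) = η g) ∧
    ∃ (f : G → G → Fˣ) (hf : f ∈ twoCocycles η)
      (hf' : (fun g g' => f (ψ g) (ψ g')) ∈ twoCocycles η),
      c₁ = QuotientGroup.mk ⟨f, hf⟩ ∧
      c₂ = QuotientGroup.mk ⟨fun g g' => f (ψ g) (ψ g'), hf'⟩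

/-!
For the trivial action of `C_n = ⟨σ⟩`, the product `f ↦ ∏_{t<n} f(σ^t, σ)` induces an
isomorphism `H²(C_n, F^*) ≅ F^*/(F^*)^n`: coboundaries go to `n`-th powers, and every cocycle is
cohomologous to the carry cocycle `(σ^i, σ^j) ↦ a^⌊(i+j)/n⌋` of its product `a`, where
`0 ≤ i, j < n`. Pulling back along the automorphism `σ ↦ σ^j` (`j` coprime to `n`) raises
classes to the `j`-th power. As `F^*` is cyclic of order `q^r - 1`, `F^*/(F^*)^n ≅ ℤ/m` with
`m = gcd(q^r - 1, n)`, so the orbits are the classes of `ℤ/m` up to units (units of `ℤ/m` lift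
to residues coprime to `n`), and the class of `k` is determined by `gcd(k, m)`.
-/

namespace ZMod

theorem gcd_val_mul_unit {m : ℕ} (a : ZMod m) (u : (ZMod m)ˣ) :
    Nat.gcd (a * u).val m = Nat.gcd a.val m := by
  rw [val_mul, ← Nat.gcd_rec, Nat.gcd_comm, (val_coe_unit_coprime u).gcd_mul_right_cancel]

theorem gcd_val_natCast_of_dvd {m d : ℕ} (hd : d ∣ m) : Nat.gcd (d : ZMod m).val m = d := by
  rw [val_natCast, ← Nat.gcd_rec, Nat.gcd_comm, Nat.gcd_eq_left hd]

theorem associated_iff_gcd_val_eq {m : ℕ} {a b : ZMod m} :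
    Associated a b ↔ Nat.gcd a.val m = Nat.gcd b.val m := by
  constructor
  · rintro ⟨u, rfl⟩
    exact (gcd_val_mul_unit a u).symm
  · intro h
    obtain ⟨d, hd, u, hu, rfl⟩ := eq_unit_mul_divisor a
    obtain ⟨e, he, v, hv, rfl⟩ := eq_unit_mul_divisor b
    rw [mul_comm u, mul_comm v, ← hu.unit_spec, ← hv.unit_spec, gcd_val_mul_unit,
      gcd_val_mul_unit, gcd_val_natCast_of_dvd hd, gcd_val_natCast_of_dvd he] at h
    subst h
    exact (associated_unit_mul_left _ _ hu).trans (associated_unit_mul_left _ _ hv).symm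

end ZMod

def CoprimeMulRel (n m : ℕ) (a b : ZMod m) : Prop :=
  ∃ j : ℕ, Nat.gcd j n = 1 ∧ b = (j : ZMod m) * a

theorem coprimeMulRel_iff_associated {n m : ℕ} [NeZero n] (hmn : m ∣ n) {a b : ZMod m} :
    CoprimeMulRel n m a b ↔ Associated a b := by
  constructor
  · rintro ⟨j, hj, rfl⟩
    exact ⟨ZMod.unitOfCoprime j (Nat.Coprime.coprime_dvd_right hmn hj), by
      rw [ZMod.coe_unitOfCoprime, mul_comm]⟩
  · rintro ⟨u, rfl⟩
    obtain ⟨w, rfl⟩ := ZMod.unitsMap_surjective hmn u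
    refine ⟨(w : ZMod n).val, ZMod.val_coe_unit_coprime w, ?_⟩
    rw [ZMod.unitsMap_val, ZMod.natCast_val, mul_comm]

noncomputable def quotCoprimeMulRelEquivDivisors {n m : ℕ} [NeZero n] (hmn : m ∣ n) :
    Quot (CoprimeMulRel n m) ≃ {d : ℕ // d ∈ m.divisors} :=
  have hm : m ≠ 0 := ne_zero_of_dvd_ne_zero (NeZero.ne n) hmn
  let gcdVal (a : ZMod m) : {d : ℕ // d ∈ m.divisors} :=
    ⟨Nat.gcd a.val m, Nat.mem_divisors.mpr ⟨Nat.gcd_dvd_right _ _, hm⟩⟩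
  have gcdVal_surjective : Function.Surjective gcdVal := fun ⟨d, hd⟩ =>
    ⟨d, Subtype.ext (ZMod.gcd_val_natCast_of_dvd (Nat.dvd_of_mem_divisors hd))⟩
  have hrel (a b : ZMod m) : CoprimeMulRel n m a b ↔ gcdVal a = gcdVal b := by
    rw [coprimeMulRel_iff_associated hmn, ZMod.associated_iff_gcd_val_eq, Subtype.ext_iff]
  (Quot.congrRight hrel).trans (Setoid.quotientKerEquivOfSurjective gcdVal gcdVal_surjective)

def CoprimePowRel (n : ℕ) {M : Type*} [Monoid M] (x y : M) : Prop :=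
  ∃ j : ℕ, Nat.gcd j n = 1 ∧ y = x ^ j

theorem MulEquiv.coprimePowRel_iff {M M' : Type*} [Monoid M] [Monoid M'] (e : M ≃* M') (n : ℕ)
    {x y : M} : CoprimePowRel n (e x) (e y) ↔ CoprimePowRel n x y := by
  simp only [CoprimePowRel, ← map_pow, e.injective.eq_iff]

theorem coprimePowRel_iff_coprimeMulRel {n m : ℕ} {a b : Multiplicative (ZMod m)} :
    CoprimePowRel n a b ↔ CoprimeMulRel n m a.toAdd b.toAdd := by
  simp only [CoprimePowRel, CoprimeMulRel, ← nsmul_eq_mul]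
  rfl

theorem QuotientGroup.mk_pow_mod {A : Type*} [CommGroup A] (n : ℕ) (a : A) (k : ℕ) :
    ((a ^ (k % n) : A) : A ⧸ (powMonoidHom n : A →* A).range) = (a : A ⧸ _) ^ k := by
  have h : (a : A ⧸ (powMonoidHom n : A →* A).range) ^ n = 1 := by
    rw [← mk_pow, eq_one_iff]
    exact ⟨a, rfl⟩
  rw [mk_pow, ← pow_eq_pow_mod k h]

theorem ZMod.castHom_gcd_eq_zero_iff {N n : ℕ} (t : ZMod N) :
    castHom (Nat.gcd_dvd_left N n) (ZMod (N.gcd n)) t = 0 ↔ ∃ s : ZMod N, n • s = t := by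
  obtain ⟨i, rfl⟩ := intCast_surjective t
  rw [map_intCast, intCast_zmod_eq_zero_iff_dvd]
  constructor
  · rintro ⟨c, rfl⟩
    refine ⟨(N.gcdB n * c : ℤ), ?_⟩
    rw [Nat.gcd_eq_gcd_ab, nsmul_eq_mul]
    push_cast
    rw [natCast_self]
    ring
  · rintro ⟨s, hs⟩
    obtain ⟨k, rfl⟩ := intCast_surjective s
    rw [nsmul_eq_mul, ← Int.cast_natCast, ← Int.cast_mul, intCast_eq_intCast_iff_dvd_sub] at hs
    have hN : (N.gcd n : ℤ) ∣ N := Int.natCast_dvd_natCast.mpr (Nat.gcd_dvd_left N n)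
    have hn : (N.gcd n : ℤ) ∣ n := Int.natCast_dvd_natCast.mpr (Nat.gcd_dvd_right N n)
    have := (hN.trans hs).add (hn.mul_right k)
    rwa [sub_add_cancel] at this

noncomputable def quotientPowRangeEquivZMod {A : Type*} [CommGroup A] {g : A}
    (hg : ∀ x, x ∈ Subgroup.zpowers g) {N : ℕ} (hN : Nat.card A = N) (n : ℕ) :
    A ⧸ (powMonoidHom n : A →* A).range ≃* Multiplicative (ZMod (N.gcd n)) :=
  let e := zmodMulEquivOfGenerator hg hN
  let κ : A →* Multiplicative (ZMod (N.gcd n)) :=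
    (ZMod.castHom (Nat.gcd_dvd_left N n) _).toAddMonoidHom.toMultiplicative.comp
      e.symm.toMonoidHom
  have hκ : Function.Surjective κ :=
    (ZMod.castHom_surjective (Nat.gcd_dvd_left N n)).comp e.symm.surjective
  have hker : (powMonoidHom n : A →* A).range = κ.ker := by
    ext x
    obtain ⟨y, rfl⟩ := e.surjective x
    rw [MonoidHom.mem_ker, MonoidHom.mem_range, e.surjective.exists]
    simp only [powMonoidHom_apply, ← map_pow, e.injective.eq_iff]
    change _ ↔ ZMod.castHom (Nat.gcd_dvd_left N n) (ZMod (N.gcd n)) (e.symm (e y)).toAdd = 0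
    rw [e.symm_apply_apply, ZMod.castHom_gcd_eq_zero_iff]
    rfl
  (QuotientGroup.quotientMulEquivOfEq hker).trans
    (QuotientGroup.quotientKerEquivOfSurjective κ hκ)

section DiscreteLog

variable {G : Type*} [Group G]

open Classical in
noncomputable def dlog (σ : G) (n : ℕ) (g : G) : ℕ :=
  if h : ∃ k, k < n ∧ σ ^ k = g then h.choose else 0

noncomputable def carry (σ : G) (n : ℕ) (g h : G) : ℕ :=
  (dlog σ n g + dlog σ n h) / n

variable {σ : G} {n : ℕ}

theorem dlog_lt_and_pow_dlog (hn : 0 < n) (hord : orderOf σ = n) {g : G}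
    (hg : g ∈ Subgroup.zpowers σ) : dlog σ n g < n ∧ σ ^ dlog σ n g = g := by
  classical
  have hex : ∃ k, k < n ∧ σ ^ k = g := by
    have hσ : IsOfFinOrder σ := orderOf_pos_iff.mp (hord ▸ hn)
    obtain ⟨k, hk, rfl⟩ := Finset.mem_image.mp (hσ.mem_zpowers_iff_mem_range_orderOf.mp hg)
    exact ⟨k, hord ▸ Finset.mem_range.mp hk, rfl⟩
  rw [dlog, dif_pos hex]
  exact hex.choose_spec

theorem pow_dlog (hn : 0 < n) (hord : orderOf σ = n) {g : G} (hg : g ∈ Subgroup.zpowers σ) :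
    σ ^ dlog σ n g = g :=
  (dlog_lt_and_pow_dlog hn hord hg).2

theorem dlog_pow (hn : 0 < n) (hord : orderOf σ = n) (i : ℕ) : dlog σ n (σ ^ i) = i % n := by
  obtain ⟨hlt, hpow⟩ := dlog_lt_and_pow_dlog hn hord (Subgroup.npow_mem_zpowers σ i)
  have hmod := pow_eq_pow_iff_modEq.mp hpow
  rw [hord, Nat.ModEq, Nat.mod_eq_of_lt hlt] at hmod
  exact hmod

theorem dlog_add_dlog (hn : 0 < n) (hord : orderOf σ = n)
    (hgen : ∀ g : G, g ∈ Subgroup.zpowers σ) (g h : G) :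
    dlog σ n g + dlog σ n h = n * carry σ n g h + dlog σ n (g * h) := by
  have hgh : σ ^ (dlog σ n g + dlog σ n h) = g * h := by
    rw [pow_add, pow_dlog hn hord (hgen g), pow_dlog hn hord (hgen h)]
  rw [← hgh, dlog_pow hn hord, carry, Nat.div_add_mod]

theorem carry_add_carry (hn : 0 < n) (hord : orderOf σ = n)
    (hgen : ∀ g : G, g ∈ Subgroup.zpowers σ) (g h k : G) :
    carry σ n h k + carry σ n g (h * k) = carry σ n g h + carry σ n (g * h) k := by
  have h₁ := dlog_add_dlog hn hord hgen h k
  have h₂ := dlog_add_dlog hn hord hgen g (h * k)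
  have h₃ := dlog_add_dlog hn hord hgen g h
  have h₄ := dlog_add_dlog hn hord hgen (g * h) k
  rw [← mul_assoc] at h₂
  refine Nat.eq_of_mul_eq_mul_left hn ?_
  rw [mul_add, mul_add]
  omega

/-- Summing the carries along `1, τ, τ², …, τⁿ = 1` telescopes. -/
theorem sum_carry_pow (hn : 0 < n) (hord : orderOf σ = n)
    (hgen : ∀ g : G, g ∈ Subgroup.zpowers σ) (τ : G) :
    ∑ t ∈ Finset.range n, carry σ n (τ ^ t) τ = dlog σ n τ := by
  have hτ : τ ^ n = 1 := by
    rw [← hord, orderOf_eq_card_of_forall_mem_zpowers hgen]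
    exact pow_card_eq_one'
  have hdlog_one : dlog σ n 1 = 0 := by simpa using dlog_pow hn hord 0
  have hstep := Finset.sum_congr rfl fun t (_ : t ∈ Finset.range n) =>
    (pow_succ τ t ▸ dlog_add_dlog hn hord hgen (τ ^ t) τ)
  have hshift := (Finset.sum_range_succ (fun t => dlog σ n (τ ^ t)) n).symm.trans
    (Finset.sum_range_succ' (fun t => dlog σ n (τ ^ t)) n)
  rw [Finset.sum_add_distrib, Finset.sum_add_distrib, Finset.sum_const, Finset.card_range,
    ← Finset.mul_sum, smul_eq_mul] at hstep
  simp only [hτ, hdlog_one, pow_zero, add_zero] at hshift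
  refine Nat.eq_of_mul_eq_mul_left hn ?_
  omega

end DiscreteLog

section Automorphisms

variable {G : Type*} [Group G] {σ : G}

theorem exists_mulAut_apply_eq_pow (hgen : ∀ g : G, g ∈ Subgroup.zpowers σ) {j : ℕ}
    (hj : j.Coprime (orderOf σ)) : ∃ ψ : MulAut G, ψ σ = σ ^ j := by
  have hcard : (Nat.card G).Coprime j := by
    rw [← orderOf_eq_card_of_forall_mem_zpowers hgen]
    exact hj.symm
  have hcomm (a b : G) : Commute a b := by
    obtain ⟨x, rfl⟩ := Subgroup.mem_zpowers_iff.mp (hgen a)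
    obtain ⟨y, rfl⟩ := Subgroup.mem_zpowers_iff.mp (hgen b)
    exact Commute.zpow_zpow_self σ x y
  exact ⟨⟨powCoprime hcard, fun a b => (hcomm a b).mul_pow j⟩, rfl⟩

theorem coprime_of_mulAut_apply_eq_pow (hσ : IsOfFinOrder σ) (ψ : MulAut G) {k : ℕ}
    (hk : ψ σ = σ ^ k) : k.Coprime (orderOf σ) := by
  have hord : orderOf (σ ^ k) = orderOf σ := by
    rw [← hk, MulEquiv.orderOf_eq]
  rw [hσ.orderOf_pow, Nat.div_eq_self] at hord
  rw [Nat.coprime_comm]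
  exact hord.resolve_left hσ.orderOf_pos.ne'

end Automorphisms

section TrivialAction

variable {G F : Type*} [Group G] [Field F] {f : G → G → Fˣ}

theorem isTwoCocycle_one_iff :
    IsTwoCocycle (1 : G →* RingAut F) f ↔
      ∀ g h k, f h k * f g (h * k) = f g h * f (g * h) k := by
  simp only [IsTwoCocycle, Units.ext_iff, Units.val_mul]
  rfl

theorem isTwoCoboundary_one_iff :
    IsTwoCoboundary (1 : G →* RingAut F) f ↔
      ∃ r : G → Fˣ, ∀ g h, f g h = r g * r h * (r (g * h))⁻¹ := by
  simp only [IsTwoCoboundary, Units.ext_iff, Units.val_mul]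
  rfl

theorem mem_twoCoboundaries {η : G →* RingAut F} :
    f ∈ twoCoboundaries η ↔ IsTwoCoboundary η f :=
  Iff.rfl

theorem IsTwoCocycle.apply_one (hf : IsTwoCocycle (1 : G →* RingAut F) f) (g : G) :
    f g 1 = f 1 1 := by
  have h := isTwoCocycle_one_iff.mp hf g 1 1
  rw [mul_one, mul_one] at h
  exact (mul_right_cancel h).symm

variable {Φ : Type*} [FunLike Φ G G] [MonoidHomClass Φ G G]

theorem IsTwoCocycle.pullback (hf : IsTwoCocycle (1 : G →* RingAut F) f) (ψ : Φ) :
    IsTwoCocycle (1 : G →* RingAut F) fun g g' => f (ψ g) (ψ g') := by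
  rw [isTwoCocycle_one_iff] at hf ⊢
  intro g h k
  simpa only [map_mul] using hf (ψ g) (ψ h) (ψ k)

theorem IsTwoCoboundary.pullback (hf : IsTwoCoboundary (1 : G →* RingAut F) f) (ψ : Φ) :
    IsTwoCoboundary (1 : G →* RingAut F) fun g g' => f (ψ g) (ψ g') := by
  obtain ⟨r, hr⟩ := isTwoCoboundary_one_iff.mp hf
  exact isTwoCoboundary_one_iff.mpr ⟨fun g => r (ψ g), fun g h => by simp only [hr, map_mul]⟩

def cocycleProd (σ : G) (i : ℕ) : (G → G → Fˣ) →* Fˣ where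
  toFun f := ∏ t ∈ Finset.range i, f (σ ^ t) σ
  map_one' := by simp
  map_mul' f f' := by simp [Finset.prod_mul_distrib]

variable {σ : G} {n : ℕ}

theorem cocycleProd_apply (i : ℕ) :
    cocycleProd σ i f = ∏ t ∈ Finset.range i, f (σ ^ t) σ :=
  rfl

theorem apply_pow_mul_cocycleProd (hf : IsTwoCocycle (1 : G →* RingAut F) f) (i j : ℕ) :
    f (σ ^ i) (σ ^ j) * cocycleProd σ i f * cocycleProd σ j f =
      f 1 1 * cocycleProd σ (i + j) f := by
  induction j with
  | zero => simp [hf.apply_one, cocycleProd_apply]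
  | succ j ih =>
    have hcoc := isTwoCocycle_one_iff.mp hf (σ ^ i) (σ ^ j) σ
    rw [← pow_succ, ← pow_add] at hcoc
    have hsucc (l : ℕ) : cocycleProd σ (l + 1) f = cocycleProd σ l f * f (σ ^ l) σ :=
      Finset.prod_range_succ _ _
    rw [← add_assoc, hsucc, hsucc]
    calc f (σ ^ i) (σ ^ (j + 1)) * cocycleProd σ i f * (cocycleProd σ j f * f (σ ^ j) σ)
        = f (σ ^ j) σ * f (σ ^ i) (σ ^ (j + 1)) *
            (cocycleProd σ i f * cocycleProd σ j f) := by
          ac_rfl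
      _ = f (σ ^ i) (σ ^ j) * cocycleProd σ i f * cocycleProd σ j f * f (σ ^ (i + j)) σ := by
          rw [hcoc]; ac_rfl
      _ = f 1 1 * (cocycleProd σ (i + j) f * f (σ ^ (i + j)) σ) := by
          rw [ih, mul_assoc]

theorem cocycleProd_mul_add (hσ : σ ^ n = 1) (k s : ℕ) :
    cocycleProd σ (n * k + s) f = cocycleProd σ n f ^ k * cocycleProd σ s f := by
  have hshift (i : ℕ) : cocycleProd σ (n + i) f = cocycleProd σ n f * cocycleProd σ i f := by
    simp only [cocycleProd_apply, Finset.prod_range_add, pow_add, hσ, one_mul]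
  induction k with
  | zero => simp
  | succ k ih => rw [mul_add_one, add_comm _ n, add_assoc, hshift, ih, pow_succ', mul_assoc]

theorem cocycleProd_mem_range_of_isTwoCoboundary (hσ : σ ^ n = 1)
    (hf : IsTwoCoboundary (1 : G →* RingAut F) f) :
    cocycleProd σ n f ∈ (powMonoidHom n : Fˣ →* Fˣ).range := by
  obtain ⟨r, hr⟩ := isTwoCoboundary_one_iff.mp hf
  refine ⟨r σ, ?_⟩
  calc r σ ^ n = r σ ^ n * (r (σ ^ 0) / r (σ ^ n)) := by rw [hσ, pow_zero, div_self', mul_one]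
    _ = ∏ t ∈ Finset.range n, r σ * (r (σ ^ t) / r (σ ^ (t + 1))) := by
      rw [Finset.prod_mul_distrib, Finset.prod_const, Finset.card_range, Finset.prod_range_div']
    _ = cocycleProd σ n f := by
      refine Finset.prod_congr rfl fun t _ => ?_
      rw [hr, ← pow_succ, div_eq_mul_inv, mul_comm (r σ)]
      ac_rfl

variable (σ n) in
noncomputable def carryCocycle (a : Fˣ) (g h : G) : Fˣ :=
  a ^ carry σ n g h

theorem isTwoCocycle_carryCocycle (hn : 0 < n) (hord : orderOf σ = n)
    (hgen : ∀ g : G, g ∈ Subgroup.zpowers σ) (a : Fˣ) :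
    IsTwoCocycle (1 : G →* RingAut F) (carryCocycle σ n a) :=
  isTwoCocycle_one_iff.mpr fun g h k => by
    simp only [carryCocycle, ← pow_add, carry_add_carry hn hord hgen]

theorem isTwoCoboundary_carryCocycle_pow (hn : 0 < n) (hord : orderOf σ = n)
    (hgen : ∀ g : G, g ∈ Subgroup.zpowers σ) (w : Fˣ) :
    IsTwoCoboundary (1 : G →* RingAut F) (carryCocycle σ n (w ^ n)) := by
  refine isTwoCoboundary_one_iff.mpr ⟨fun g => w ^ dlog σ n g, fun g h => ?_⟩
  rw [eq_mul_inv_iff_mul_eq, carryCocycle, ← pow_mul, ← pow_add, ← pow_add,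
    dlog_add_dlog hn hord hgen]

theorem isTwoCoboundary_mul_inv_carryCocycle (hn : 0 < n) (hord : orderOf σ = n)
    (hgen : ∀ g : G, g ∈ Subgroup.zpowers σ) (hf : IsTwoCocycle (1 : G →* RingAut F) f) :
    IsTwoCoboundary (1 : G →* RingAut F) (f * (carryCocycle σ n (cocycleProd σ n f))⁻¹) := by
  refine isTwoCoboundary_one_iff.mpr
    ⟨fun g => f 1 1 * (cocycleProd σ (dlog σ n g) f)⁻¹, fun g h => ?_⟩
  have key := apply_pow_mul_cocycleProd (σ := σ) hf (dlog σ n g) (dlog σ n h)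
  rw [pow_dlog hn hord (hgen g), pow_dlog hn hord (hgen h), dlog_add_dlog hn hord hgen,
    cocycleProd_mul_add (hord ▸ pow_orderOf_eq_one σ)] at key
  have key' := congrArg Units.val key
  simp only [Pi.mul_apply, Pi.inv_apply, carryCocycle, Units.ext_iff]
  push_cast at key' ⊢
  field_simp
  linear_combination key'

theorem prod_carryCocycle (hn : 0 < n) (hord : orderOf σ = n)
    (hgen : ∀ g : G, g ∈ Subgroup.zpowers σ) (a : Fˣ) (τ : G) :
    ∏ t ∈ Finset.range n, carryCocycle σ n a (τ ^ t) τ = a ^ dlog σ n τ := by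
  simp only [carryCocycle, Finset.prod_pow_eq_pow_sum, sum_carry_pow hn hord hgen]

variable (σ n) in
noncomputable def cocycleProdMod :
    twoCocycles (1 : G →* RingAut F) →* Fˣ ⧸ (powMonoidHom n : Fˣ →* Fˣ).range :=
  (QuotientGroup.mk' _).comp ((cocycleProd σ n).comp (twoCocycles _).subtype)

theorem cocycleProdMod_apply (f : twoCocycles (1 : G →* RingAut F)) :
    cocycleProdMod σ n f = (cocycleProd σ n (f : G → G → Fˣ) : Fˣ ⧸ _) :=
  rfl

theorem cocycleProdMod_carryCocycle (hn : 0 < n) (hord : orderOf σ = n)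
    (hgen : ∀ g : G, g ∈ Subgroup.zpowers σ) (a : Fˣ) :
    cocycleProdMod σ n ⟨carryCocycle σ n a, isTwoCocycle_carryCocycle hn hord hgen a⟩ =
      (a : Fˣ ⧸ (powMonoidHom n : Fˣ →* Fˣ).range) := by
  have hdlog : dlog σ n σ = 1 % n := by simpa using dlog_pow hn hord 1
  rw [cocycleProdMod_apply, cocycleProd_apply, prod_carryCocycle hn hord hgen, hdlog,
    QuotientGroup.mk_pow_mod, pow_one]

theorem ker_cocycleProdMod (hn : 0 < n) (hord : orderOf σ = n)
    (hgen : ∀ g : G, g ∈ Subgroup.zpowers σ) :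
    (cocycleProdMod σ n).ker =
      (twoCoboundaries (1 : G →* RingAut F)).subgroupOf (twoCocycles _) := by
  have hσ : σ ^ n = 1 := hord ▸ pow_orderOf_eq_one σ
  ext f
  rw [MonoidHom.mem_ker, cocycleProdMod_apply, QuotientGroup.eq_one_iff,
    Subgroup.mem_subgroupOf]
  constructor
  · rintro ⟨w, hw⟩
    have hnormal := isTwoCoboundary_mul_inv_carryCocycle hn hord hgen f.2
    rw [← hw] at hnormal
    simpa using (twoCoboundaries (1 : G →* RingAut F)).mul_mem (mem_twoCoboundaries.mpr hnormal)
      (mem_twoCoboundaries.mpr (isTwoCoboundary_carryCocycle_pow hn hord hgen w))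
  · exact cocycleProd_mem_range_of_isTwoCoboundary hσ

theorem cocycleProdMod_surjective (hn : 0 < n) (hord : orderOf σ = n)
    (hgen : ∀ g : G, g ∈ Subgroup.zpowers σ) :
    Function.Surjective (cocycleProdMod (F := F) σ n) := by
  rintro ⟨a⟩
  exact ⟨_, cocycleProdMod_carryCocycle hn hord hgen a⟩

noncomputable def h2EquivUnitsModPow (hn : 0 < n) (hord : orderOf σ = n)
    (hgen : ∀ g : G, g ∈ Subgroup.zpowers σ) :
    H2 (1 : G →* RingAut F) ≃* Fˣ ⧸ (powMonoidHom n : Fˣ →* Fˣ).range :=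
  (QuotientGroup.quotientMulEquivOfEq (ker_cocycleProdMod hn hord hgen).symm).trans
    (QuotientGroup.quotientKerEquivOfSurjective _ (cocycleProdMod_surjective hn hord hgen))

theorem h2EquivUnitsModPow_mk (hn : 0 < n) (hord : orderOf σ = n)
    (hgen : ∀ g : G, g ∈ Subgroup.zpowers σ) (f : twoCocycles (1 : G →* RingAut F)) :
    h2EquivUnitsModPow hn hord hgen (f : H2 (1 : G →* RingAut F)) = cocycleProdMod σ n f :=
  rfl

theorem cocycleProdMod_pullback (hn : 0 < n) (hord : orderOf σ = n)
    (hgen : ∀ g : G, g ∈ Subgroup.zpowers σ) (ψ : MulAut G) {k : ℕ} (hψ : ψ σ = σ ^ k)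
    (f : twoCocycles (1 : G →* RingAut F)) :
    cocycleProdMod σ n ⟨fun g g' => f.1 (ψ g) (ψ g'), IsTwoCocycle.pullback f.2 ψ⟩ =
      cocycleProdMod σ n f ^ k := by
  -- `f` is a coboundary times the carry cocycle of `a`; only the latter contributes.
  set a := cocycleProd σ n (f : G → G → Fˣ)
  have hd := (isTwoCoboundary_mul_inv_carryCocycle hn hord hgen f.2).pullback ψ
  have hsplit : (fun g g' => f.1 (ψ g) (ψ g')) =
      (fun g g' => (f.1 * (carryCocycle σ n a)⁻¹) (ψ g) (ψ g')) *
        fun g g' => carryCocycle σ n a (ψ g) (ψ g') := by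
    funext g g'
    simp
  have hone : (cocycleProd σ n (fun g g' => (f.1 * (carryCocycle σ n a)⁻¹) (ψ g) (ψ g')) :
      Fˣ ⧸ (powMonoidHom n : Fˣ →* Fˣ).range) = 1 :=
    (QuotientGroup.eq_one_iff _).mpr
      (cocycleProd_mem_range_of_isTwoCoboundary (hord ▸ pow_orderOf_eq_one σ) hd)
  rw [cocycleProdMod_apply, cocycleProdMod_apply]
  dsimp only
  rw [hsplit, map_mul, QuotientGroup.mk_mul, hone]
  refine (one_mul (M := Fˣ ⧸ (powMonoidHom n : Fˣ →* Fˣ).range) _).trans ?_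
  rw [cocycleProd_apply]
  simp only [map_pow, hψ]
  rw [prod_carryCocycle hn hord hgen, dlog_pow hn hord, QuotientGroup.mk_pow_mod]

theorem pullbackRel_one_iff (hn : 0 < n) (hord : orderOf σ = n)
    (hgen : ∀ g : G, g ∈ Subgroup.zpowers σ) {c c' : H2 (1 : G →* RingAut F)} :
    pullbackRel 1 c c' ↔
      CoprimePowRel n (h2EquivUnitsModPow hn hord hgen c) (h2EquivUnitsModPow hn hord hgen c') := by
  constructor
  · rintro ⟨ψ, -, f, hf, -, rfl, rfl⟩
    have hψ : ψ σ = σ ^ dlog σ n (ψ σ) := (pow_dlog hn hord (hgen _)).symm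
    refine ⟨dlog σ n (ψ σ), ?_, ?_⟩
    · have := coprime_of_mulAut_apply_eq_pow (orderOf_pos_iff.mp (hord ▸ hn)) ψ hψ
      rwa [hord] at this
    · exact cocycleProdMod_pullback hn hord hgen ψ hψ ⟨f, hf⟩
  · rintro ⟨j, hj, hc'⟩
    obtain ⟨f, rfl⟩ := QuotientGroup.mk_surjective c
    obtain ⟨ψ, hψ⟩ := exists_mulAut_apply_eq_pow hgen (hord ▸ hj)
    refine ⟨ψ, fun _ => rfl, f, f.2, IsTwoCocycle.pullback f.2 ψ, rfl,
      (h2EquivUnitsModPow hn hord hgen).injective ?_⟩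
    rw [hc', h2EquivUnitsModPow_mk, h2EquivUnitsModPow_mk,
      cocycleProdMod_pullback hn hord hgen ψ hψ]

end TrivialAction

theorem trivial_action_orbits_equiv_divisors_general {G F : Type*} [Group G] [Field F]
    [Fintype F]
    (q r n : ℕ) (hn : 0 < n)
    (hF : Fintype.card F = q ^ r)
    (σ : G) (hgen : ∀ g : G, g ∈ Subgroup.zpowers σ) (hord : orderOf σ = n) :
    Nonempty (Quot (fun a b : ZMod (Nat.gcd (q ^ r - 1) n) =>
        ∃ j : ℕ, Nat.gcd j n = 1 ∧ b = (j : ZMod _) * a) ≃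
      {d : ℕ // d ∈ (Nat.gcd (q ^ r - 1) n).divisors}) ∧
    Nonempty (Quot (pullbackRel (1 : G →* RingAut F)) ≃
      {d : ℕ // d ∈ (Nat.gcd (q ^ r - 1) n).divisors}) := by
  have : NeZero n := ⟨hn.ne'⟩
  have hcard : Nat.card Fˣ = q ^ r - 1 := by rw [Nat.card_units, Nat.card_eq_fintype_card, hF]
  obtain ⟨g, hg⟩ := IsCyclic.exists_generator (α := Fˣ)
  let e := (h2EquivUnitsModPow hn hord hgen).trans (quotientPowRangeEquivZMod hg hcard n)
  let divisorsEquiv := quotCoprimeMulRelEquivDivisors (Nat.gcd_dvd_right (q ^ r - 1) n)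
  refine ⟨⟨divisorsEquiv⟩, ⟨?_⟩⟩
  have hrel (c c' : H2 (1 : G →* RingAut F)) :
      pullbackRel 1 c c' ↔ CoprimePowRel n (e c) (e c') :=
    (pullbackRel_one_iff hn hord hgen).trans
      (MulEquiv.coprimePowRel_iff (quotientPowRangeEquivZMod hg hcard n) n).symm
  exact (Quot.congr e.toEquiv hrel).trans
    ((Quot.congr Multiplicative.toAdd fun _ _ => coprimePowRel_iff_coprimeMulRel).trans
      divisorsEquiv)

/-- let `F = F_{q^r}` carry the trivial action of the cyclic group
`C_n = ⟨σ⟩`, and set `m = gcd(q^r - 1, n)`. Then (i) the quotient of `ℤ/mℤ` by the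
relation `a ∼ b` iff `b = j·a` for some `j` coprime to `n` is in bijection with the
set of positive divisors of `m`; consequently (ii) the orbits of the pullback action
of `Aut(C_n)` on `H²(C_n, F^*)` are in one-to-one correspondence with the positive
divisors of `gcd(q^r - 1, n)`. -/
theorem trivial_action_orbits_equiv_divisors {G F : Type*} [Group G] [Field F]
    [Fintype F]
    (q r n : ℕ) (hq : q.Prime) (hr : 0 < r) (hn : 0 < n)
    (hF : Fintype.card F = q ^ r)
    (σ : G) (hgen : ∀ g : G, g ∈ Subgroup.zpowers σ) (hord : orderOf σ = n) :
    Nonempty (Quot (fun a b : ZMod (Nat.gcd (q ^ r - 1) n) =>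
        ∃ j : ℕ, Nat.gcd j n = 1 ∧ b = (j : ZMod _) * a) ≃
      {d : ℕ // d ∈ (Nat.gcd (q ^ r - 1) n).divisors}) ∧
    Nonempty (Quot (pullbackRel (1 : G →* RingAut F)) ≃
      {d : ℕ // d ∈ (Nat.gcd (q ^ r - 1) n).divisors}) :=
  trivial_action_orbits_equiv_divisors_general q r n hn hF σ hgen hord
end

section
/- Let q be a prime, let F_{q^r} be the field with q^r elements with Frobenius automorphism φ : x ↦ x^q, let k divide r and r/k divide n, let the cyclic group C_n = ⟨σ⟩ act on F_{q^r} via η(σ) = φ^k, and set m := gcd(q^k − 1, nk/r). If m divides r/k, then every η-compatible automorphism of C_n (ψ ∈ Aut(C_n) with η ∘ ψ = η) acts trivially on H²_η(C_n, F_{q^r}^*); hence the number of orbits of the Aut_η(C_n)-pullback action on H²_η(C_n, F_{q^r}^*) equals m. -/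
/-!
For `C_n = ⟨σ⟩`, the class of a 2-cocycle `f` is detected by `Φ(f) = ∏_{i<n} f(σ^i, σ)`
modulo norms: `f` is cohomologous to the carry cocycle `(σ^i, σ^j) ↦ Φ(f)^⌊(i+j)/n⌋`, and a carry
cocycle is a coboundary exactly when its value is a norm. This gives
`H² ≅ Ĥ⁰ = (F^*)^{C_n} / N(F^*)`. With `p = q^k`, `s = r/k`, `t = n/s`, the element `σ^s` acts
trivially, so `N_n = (N_s)^t` where `N_s` maps onto the cyclic group `(F^*)^{C_n}` of order `p - 1`;
hence `|Ĥ⁰| = gcd(p - 1, t) = m`. An automorphism with `ψ σ = σ^u` raises classes to the `u`-th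
power, and `η(σ^u) = η(σ)` forces `u ≡ 1` modulo the order `s` of `x ↦ x^p`, hence modulo `m ∣ s`:
`ψ` acts trivially and the orbits are the `m` classes.
-/

open Finset

section PowIndex

variable {G : Type*} [Group G] {σ g : G}

-- `sInf ∅ = 0`, so this is `0` when `g` is not a power of `σ`.
noncomputable def powIndex (σ g : G) : ℕ := sInf {i | σ ^ i = g}

theorem pow_powIndex (hσ : IsOfFinOrder σ) (hg : g ∈ Subgroup.zpowers σ) :
    σ ^ powIndex σ g = g :=
  Nat.sInf_mem ((hσ.mem_powers_iff_mem_zpowers).mpr hg)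

theorem powIndex_lt_orderOf (hσ : IsOfFinOrder σ) (g : G) : powIndex σ g < orderOf σ := by
  by_cases h : ∃ i : ℕ, σ ^ i = g
  · obtain ⟨i, rfl⟩ := h
    exact (Nat.sInf_le (pow_mod_orderOf σ i)).trans_lt (Nat.mod_lt _ hσ.orderOf_pos)
  · have : {i | σ ^ i = g} = ∅ := Set.eq_empty_of_forall_notMem fun i hi => h ⟨i, hi⟩
    rw [powIndex, this, Nat.sInf_empty]
    exact hσ.orderOf_pos

theorem powIndex_pow (hσ : IsOfFinOrder σ) (i : ℕ) : powIndex σ (σ ^ i) = i % orderOf σ :=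
  pow_injOn_Iio_orderOf (powIndex_lt_orderOf hσ _) (Nat.mod_lt _ hσ.orderOf_pos)
    ((pow_powIndex hσ (Subgroup.npow_mem_zpowers σ i)).trans (pow_mod_orderOf σ i).symm)

theorem powIndex_mul (hσ : IsOfFinOrder σ) (hgen : ∀ g : G, g ∈ Subgroup.zpowers σ) (g h : G) :
    powIndex σ (g * h) = (powIndex σ g + powIndex σ h) % orderOf σ := by
  conv_lhs => rw [← pow_powIndex hσ (hgen g), ← pow_powIndex hσ (hgen h), ← pow_add]
  exact powIndex_pow hσ _

theorem prod_range_orderOf_comp_equiv {M : Type*} [CommMonoid M] (hσ : IsOfFinOrder σ)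
    (hgen : ∀ g : G, g ∈ Subgroup.zpowers σ) (e : G ≃ G) (u : G → M) :
    ∏ i ∈ range (orderOf σ), u (e (σ ^ i)) = ∏ i ∈ range (orderOf σ), u (σ ^ i) := by
  refine prod_nbij' (fun i => powIndex σ (e (σ ^ i))) (fun j => powIndex σ (e.symm (σ ^ j)))
    (fun _ _ => mem_range.mpr (powIndex_lt_orderOf hσ _))
    (fun _ _ => mem_range.mpr (powIndex_lt_orderOf hσ _)) ?_ ?_ ?_
  · intro i hi
    rw [pow_powIndex hσ (hgen _), e.symm_apply_apply, powIndex_pow hσ,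
      Nat.mod_eq_of_lt (mem_range.mp hi)]
  · intro j hj
    rw [pow_powIndex hσ (hgen _), e.apply_symm_apply, powIndex_pow hσ,
      Nat.mod_eq_of_lt (mem_range.mp hj)]
  · intro i _
    rw [pow_powIndex hσ (hgen _)]

theorem prod_range_orderOf_pow_add {M : Type*} [CommMonoid M] (hσ : IsOfFinOrder σ)
    (hgen : ∀ g : G, g ∈ Subgroup.zpowers σ) (u : G → M) (k : ℕ) :
    ∏ i ∈ range (orderOf σ), u (σ ^ (k + i)) = ∏ i ∈ range (orderOf σ), u (σ ^ i) := by
  simpa only [Equiv.coe_mulLeft, ← pow_add] using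
    prod_range_orderOf_comp_equiv hσ hgen (Equiv.mulLeft (σ ^ k)) u

end PowIndex

theorem eq_mod_mul_pow_div {M : Type*} [Monoid M] {P : ℕ → M} {n : ℕ} {a : M}
    (hP : ∀ k, P (k + n) = P k * a) (k : ℕ) : P k = P (k % n) * a ^ (k / n) := by
  suffices h : ∀ r q, P (r + n * q) = P r * a ^ q by
    conv_lhs => rw [← Nat.mod_add_div k n]
    exact h _ _
  intro r q
  induction q with
  | zero => simp
  | succ q ih => rw [Nat.mul_succ, ← add_assoc, hP, ih, pow_succ, mul_assoc]

theorem sum_range_add_div {n u : ℕ} (hu : u ≤ n) : ∑ i ∈ range n, (i + u) / n = u := by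
  induction u with
  | zero => exact sum_eq_zero fun i hi => Nat.div_eq_of_lt (by simpa using hi)
  | succ u ih =>
    have h := sum_range_succ' (fun i => (i + u) / n) n
    rw [sum_range_succ, ih (by omega), Nat.div_eq_of_lt (a := 0 + u) (by omega),
      Nat.div_eq_of_lt_le (k := 1) (by omega) (by omega)] at h
    simp only [add_right_comm _ 1 u] at h
    simp only [← add_assoc]
    omega

section Cocycles

variable {G F : Type*} [Group G] [Field F] {η : G →* RingAut F} {σ : G} {f : G → G → Fˣ}

def unitsAct (η : G →* RingAut F) : G →* Monoid.End Fˣ where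
  toFun g := Units.map (η g).toMonoidHom
  map_one' := by ext; simp only [map_one]; rfl
  map_mul' g h := by ext; simp only [map_mul]; rfl

@[simp]
theorem val_unitsAct (g : G) (x : Fˣ) : (unitsAct η g x : F) = η g x := rfl

theorem IsTwoCocycle.unitsAct_mul_eq (hf : IsTwoCocycle η f) (g h k : G) :
    unitsAct η g (f h k) * f g (h * k) = f g h * f (g * h) k :=
  Units.ext (hf g h k)

theorem isTwoCoboundary_iff :
    IsTwoCoboundary η f ↔
      ∃ r : G → Fˣ, ∀ g h, f g h = r g * unitsAct η g (r h) * (r (g * h))⁻¹ := by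
  simp only [IsTwoCoboundary, Units.ext_iff, Units.val_mul, val_unitsAct]

theorem IsTwoCocycle.apply_one_right (hf : IsTwoCocycle η f) (g : G) :
    f g 1 = unitsAct η g (f 1 1) := by
  simpa using (hf.unitsAct_mul_eq g 1 1).symm

theorem IsTwoCocycle.comp {E : Type*} [FunLike E G G] [MulHomClass E G G] (ψ : E)
    (hψ : ∀ g, η (ψ g) = η g)
    (hf : IsTwoCocycle η f) : IsTwoCocycle η fun g h => f (ψ g) (ψ h) := by
  intro g h k
  simpa only [map_mul, hψ] using hf (ψ g) (ψ h) (ψ k)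

theorem IsTwoCoboundary.comp {E : Type*} [FunLike E G G] [MulHomClass E G G] (ψ : E)
    (hψ : ∀ g, η (ψ g) = η g)
    (hf : IsTwoCoboundary η f) : IsTwoCoboundary η fun g h => f (ψ g) (ψ h) := by
  obtain ⟨r, hr⟩ := hf
  exact ⟨fun g => r (ψ g), fun g h => by simpa only [map_mul, hψ] using hr (ψ g) (ψ h)⟩

theorem cyclicNormHom_apply (n : ℕ) (x : Fˣ) :
    cyclicNormHom η σ n x = ∏ i ∈ range n, unitsAct η (σ ^ i) x := rfl

theorem cyclicNormHom_add (a b : ℕ) (x : Fˣ) :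
    cyclicNormHom η σ (a + b) x =
      cyclicNormHom η σ a x * unitsAct η (σ ^ a) (cyclicNormHom η σ b x) := by
  simp only [cyclicNormHom_apply, prod_range_add, map_prod, pow_add, map_mul, Monoid.End.coe_mul,
    Function.comp_apply]

theorem mem_fixedUnits_iff (hgen : ∀ g : G, g ∈ Subgroup.zpowers σ) {x : Fˣ} :
    x ∈ fixedUnits η ↔ unitsAct η σ x = x := by
  refine ⟨fun hx => Units.ext (hx σ), fun hx g => ?_⟩
  have hle : Subgroup.zpowers σ ≤ (MulAction.stabilizer (RingAut F) (x : F)).comap η :=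
    Subgroup.zpowers_le.mpr (congrArg Units.val hx)
  exact hle (hgen g)

end Cocycles

theorem Nat.add_mod_div_add_div {n : ℕ} (hn : 0 < n) (a b : ℕ) :
    (a + b % n) / n + b / n = (a + b) / n := by
  conv_rhs => rw [← Nat.mod_add_div b n, ← add_assoc, Nat.add_mul_div_left _ _ hn]

section SigmaProd

variable {G F : Type*} [Group G] [Field F] {η : G →* RingAut F} {σ : G} {f : G → G → Fˣ}

def sigmaProd {M : Type*} [CommMonoid M] (σ : G) (n : ℕ) : (G → G → M) →* M where
  toFun f := ∏ i ∈ range n, f (σ ^ i) σ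
  map_one' := by simp
  map_mul' f f' := by simp [prod_mul_distrib]

theorem sigmaProd_apply {M : Type*} [CommMonoid M] (n : ℕ) (f : G → G → M) :
    sigmaProd σ n f = ∏ i ∈ range n, f (σ ^ i) σ := rfl

theorem IsTwoCocycle.sigmaProd_mem_fixedUnits (hσ : IsOfFinOrder σ)
    (hgen : ∀ g : G, g ∈ Subgroup.zpowers σ) (hf : IsTwoCocycle η f) :
    sigmaProd σ (orderOf σ) f ∈ fixedUnits η := by
  have step : ∀ i : ℕ, unitsAct η σ (f (σ ^ i) σ) =
      f σ (σ ^ i) * f (σ ^ (1 + i)) σ * (f σ (σ ^ (1 + i)))⁻¹ := by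
    intro i
    have h := hf.unitsAct_mul_eq σ (σ ^ i) σ
    rw [← pow_succ, ← pow_succ'] at h
    rw [add_comm 1 i, eq_mul_inv_iff_mul_eq, h]
  rw [mem_fixedUnits_iff hgen, sigmaProd_apply, map_prod]
  simp only [step, prod_mul_distrib, prod_inv_distrib]
  rw [prod_range_orderOf_pow_add hσ hgen (fun g => f g σ),
    prod_range_orderOf_pow_add hσ hgen (f σ), mul_right_comm, mul_inv_cancel, one_mul]

theorem sigmaProd_mem_range_of_isTwoCoboundary (hσ : IsOfFinOrder σ)
    (hgen : ∀ g : G, g ∈ Subgroup.zpowers σ) (hf : IsTwoCoboundary η f) :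
    sigmaProd σ (orderOf σ) f ∈ (cyclicNormHom η σ (orderOf σ)).range := by
  obtain ⟨r, hr⟩ := isTwoCoboundary_iff.mp hf
  refine ⟨r σ, ?_⟩
  simp only [sigmaProd_apply, hr, ← pow_succ, prod_mul_distrib, prod_inv_distrib,
    cyclicNormHom_apply]
  rw [← prod_range_orderOf_pow_add hσ hgen r 1]
  simp only [add_comm 1, mul_inv_cancel_comm]

end SigmaProd

section StdCocycle

variable {G F : Type*} [Group G] [Field F] {η : G →* RingAut F} {σ : G} {f : G → G → Fˣ}

noncomputable def stdCocycle {M : Type*} [Monoid M] (σ : G) (a : M) : G → G → M :=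
  fun g h => a ^ ((powIndex σ g + powIndex σ h) / orderOf σ)

theorem isTwoCocycle_stdCocycle (hσ : IsOfFinOrder σ) (hgen : ∀ g : G, g ∈ Subgroup.zpowers σ)
    {a : Fˣ} (ha : a ∈ fixedUnits η) : IsTwoCocycle η (stdCocycle σ a) := by
  intro g h k
  have hfix : ∀ m : ℕ, η g ((a ^ m : Fˣ) : F) = (a ^ m : Fˣ) := fun m => pow_mem ha m g
  simp only [stdCocycle, powIndex_mul hσ hgen, hfix, ← Units.val_mul, ← pow_add]
  congr 2
  have h1 := Nat.add_mod_div_add_div hσ.orderOf_pos (powIndex σ g) (powIndex σ h + powIndex σ k)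
  have h2 := Nat.add_mod_div_add_div hσ.orderOf_pos (powIndex σ k) (powIndex σ g + powIndex σ h)
  rw [Nat.add_comm (powIndex σ k) (_ % _), Nat.add_comm (powIndex σ k), add_assoc] at h2
  omega

theorem IsTwoCocycle.cohomologous_stdCocycle (hσ : IsOfFinOrder σ)
    (hgen : ∀ g : G, g ∈ Subgroup.zpowers σ) (hf : IsTwoCocycle η f) :
    Cohomologous η f (stdCocycle σ (sigmaProd σ (orderOf σ) f)) := by
  set P : ℕ → Fˣ := fun k => ∏ j ∈ range k, f (σ ^ j) σ with hP
  have hPn : ∀ k, P (k + orderOf σ) = P k * sigmaProd σ (orderOf σ) f := fun k => by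
    simp only [hP]
    rw [prod_range_add, prod_range_orderOf_pow_add hσ hgen (fun g => f g σ) k, sigmaProd_apply]
  have key : ∀ i j, f (σ ^ i) (σ ^ j) =
      unitsAct η (σ ^ i) (f 1 1) * P (i + j) * (P i)⁻¹ * (unitsAct η (σ ^ i) (P j))⁻¹ := by
    intro i j
    induction j with
    | zero => rw [pow_zero, hf.apply_one_right]; simp [hP]
    | succ j ih =>
      have h := hf.unitsAct_mul_eq (σ ^ i) (σ ^ j) σ
      rw [← pow_succ, ← pow_add] at h
      rw [eq_inv_mul_of_mul_eq h, ih, ← add_assoc]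
      simp only [hP, prod_range_succ, map_mul, Units.ext_iff, Units.val_mul,
        Units.val_inv_eq_inv_val]
      field_simp
  refine isTwoCoboundary_iff.mpr ⟨fun g => f 1 1 * (P (powIndex σ g))⁻¹, fun g h => ?_⟩
  obtain ⟨i, hi, rfl⟩ : ∃ i < orderOf σ, σ ^ i = g :=
    ⟨_, powIndex_lt_orderOf hσ g, pow_powIndex hσ (hgen g)⟩
  obtain ⟨j, hj, rfl⟩ : ∃ j < orderOf σ, σ ^ j = h :=
    ⟨_, powIndex_lt_orderOf hσ h, pow_powIndex hσ (hgen h)⟩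
  simp only [stdCocycle, ← pow_add, powIndex_pow hσ, Nat.mod_eq_of_lt hi, Nat.mod_eq_of_lt hj,
    key, eq_mod_mul_pow_div hPn (i + j), map_mul, map_inv, Units.ext_iff, Units.val_mul,
    Units.val_inv_eq_inv_val]
  field_simp

theorem isTwoCoboundary_stdCocycle_norm (hσ : IsOfFinOrder σ)
    (hgen : ∀ g : G, g ∈ Subgroup.zpowers σ) (x : Fˣ) :
    IsTwoCoboundary η (stdCocycle σ (cyclicNormHom η σ (orderOf σ) x)) := by
  have hN : ∀ k, cyclicNormHom η σ (k + orderOf σ) x =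
      cyclicNormHom η σ k x * cyclicNormHom η σ (orderOf σ) x := by
    intro k
    rw [add_comm, cyclicNormHom_add, pow_orderOf_eq_one, map_one, Monoid.End.coe_one, id_eq,
      mul_comm]
  refine isTwoCoboundary_iff.mpr ⟨fun g => cyclicNormHom η σ (powIndex σ g) x, fun g h => ?_⟩
  obtain ⟨i, hi, rfl⟩ : ∃ i < orderOf σ, σ ^ i = g :=
    ⟨_, powIndex_lt_orderOf hσ g, pow_powIndex hσ (hgen g)⟩
  obtain ⟨j, hj, rfl⟩ : ∃ j < orderOf σ, σ ^ j = h :=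
    ⟨_, powIndex_lt_orderOf hσ h, pow_powIndex hσ (hgen h)⟩
  simp only [stdCocycle, ← pow_add, powIndex_pow hσ, Nat.mod_eq_of_lt hi, Nat.mod_eq_of_lt hj]
  rw [← cyclicNormHom_add, eq_mod_mul_pow_div (P := fun k => cyclicNormHom η σ k x) hN (i + j),
    mul_inv_cancel_comm]

end StdCocycle

theorem Nat.card_quot_of_forall_rel_eq {α : Type*} {r : α → α → Prop}
    (h : ∀ a b, r a b → a = b) : Nat.card (Quot r) = Nat.card α :=
  Nat.card_congr
    ⟨Quot.lift id h, Quot.mk r, fun x => by induction x using Quot.ind; rfl, fun _ => rfl⟩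

section TateH0

variable {G F : Type*} [Group G] [Field F] {η : G →* RingAut F} {σ : G} {f : G → G → Fˣ}

theorem IsTwoCocycle.isTwoCoboundary_iff_sigmaProd_mem (hσ : IsOfFinOrder σ)
    (hgen : ∀ g : G, g ∈ Subgroup.zpowers σ) (hf : IsTwoCocycle η f) :
    IsTwoCoboundary η f ↔ sigmaProd σ (orderOf σ) f ∈ (cyclicNormHom η σ (orderOf σ)).range := by
  refine ⟨sigmaProd_mem_range_of_isTwoCoboundary hσ hgen, fun ⟨x, hx⟩ => ?_⟩
  have h := (twoCoboundaries η).mul_mem (hf.cohomologous_stdCocycle hσ hgen)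
    (hx ▸ isTwoCoboundary_stdCocycle_norm hσ hgen x)
  rwa [show (fun g h => f g h * (stdCocycle σ (sigmaProd σ (orderOf σ) f) g h)⁻¹) *
      stdCocycle σ (sigmaProd σ (orderOf σ) f) = f from
    funext₂ fun g h => inv_mul_cancel_right _ _] at h

abbrev TateH0 (η : G →* RingAut F) (σ : G) :=
  fixedUnits η ⧸ (cyclicNormHom η σ (orderOf σ)).range.subgroupOf (fixedUnits η)

noncomputable def cocycleClass (hσ : IsOfFinOrder σ) (hgen : ∀ g : G, g ∈ Subgroup.zpowers σ) :
    twoCocycles η →* TateH0 η σ :=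
  (QuotientGroup.mk' _).comp <|
    ((sigmaProd σ (orderOf σ)).comp (twoCocycles η).subtype).codRestrict (fixedUnits η)
      fun f => IsTwoCocycle.sigmaProd_mem_fixedUnits hσ hgen f.2

theorem ker_cocycleClass (hσ : IsOfFinOrder σ) (hgen : ∀ g : G, g ∈ Subgroup.zpowers σ) :
    (cocycleClass (η := η) hσ hgen).ker = (twoCoboundaries η).subgroupOf (twoCocycles η) := by
  ext f
  rw [MonoidHom.mem_ker, Subgroup.mem_subgroupOf, cocycleClass, MonoidHom.comp_apply,
    QuotientGroup.mk'_apply, QuotientGroup.eq_one_iff, Subgroup.mem_subgroupOf]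
  exact (IsTwoCocycle.isTwoCoboundary_iff_sigmaProd_mem hσ hgen f.2).symm

theorem cocycleClass_eq_iff (hσ : IsOfFinOrder σ) (hgen : ∀ g : G, g ∈ Subgroup.zpowers σ)
    (f₁ f₂ : twoCocycles η) :
    cocycleClass hσ hgen f₁ = cocycleClass hσ hgen f₂ ↔ Cohomologous η f₁ f₂ := by
  rw [← div_eq_one, ← map_div (cocycleClass (η := η) hσ hgen), ← MonoidHom.mem_ker,
    ker_cocycleClass, Subgroup.mem_subgroupOf]
  rfl

theorem prod_stdCocycle {M : Type*} [CommMonoid M] (hσ : IsOfFinOrder σ) (a : M) (g : G) :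
    ∏ i ∈ range (orderOf σ), stdCocycle σ a (σ ^ i) g = a ^ powIndex σ g := by
  rw [prod_congr rfl fun i hi => by
      rw [stdCocycle, powIndex_pow hσ, Nat.mod_eq_of_lt (mem_range.mp hi)],
    prod_pow_eq_pow_sum, sum_range_add_div (powIndex_lt_orderOf hσ g).le]

theorem cocycleClass_surjective (hσ : IsOfFinOrder σ) (hgen : ∀ g : G, g ∈ Subgroup.zpowers σ) :
    Function.Surjective (cocycleClass (η := η) hσ hgen) := by
  intro c
  obtain ⟨⟨b, hb⟩, rfl⟩ := QuotientGroup.mk_surjective c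
  obtain h1 | h1 := (Nat.one_le_iff_ne_zero.mpr hσ.orderOf_pos.ne').eq_or_lt
  · -- the carry cocycle is trivial for `n = 1`, but then every unit is a norm
    refine ⟨1, ?_⟩
    rw [map_one, eq_comm, QuotientGroup.eq_one_iff, Subgroup.mem_subgroupOf]
    exact ⟨b, by simp [cyclicNormHom_apply, ← h1]⟩
  · refine ⟨⟨stdCocycle σ b, isTwoCocycle_stdCocycle hσ hgen hb⟩, ?_⟩
    rw [cocycleClass, MonoidHom.comp_apply, QuotientGroup.mk'_apply]
    congr 1
    apply Subtype.ext
    change ∏ i ∈ range (orderOf σ), stdCocycle σ b (σ ^ i) σ = b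
    have hσσ : powIndex σ σ = 1 := by simpa [Nat.mod_eq_of_lt h1] using powIndex_pow hσ 1
    rw [prod_stdCocycle hσ, hσσ, pow_one]

theorem card_H2_eq_card_tateH0 (hσ : IsOfFinOrder σ) (hgen : ∀ g : G, g ∈ Subgroup.zpowers σ) :
    Nat.card (H2 η) = Nat.card (TateH0 η σ) :=
  Nat.card_congr ((QuotientGroup.quotientMulEquivOfEq (ker_cocycleClass hσ hgen).symm).trans
    (QuotientGroup.quotientKerEquivOfSurjective _ (cocycleClass_surjective hσ hgen))).toEquiv

theorem cocycleClass_comp_mulAut (hσ : IsOfFinOrder σ) (hgen : ∀ g : G, g ∈ Subgroup.zpowers σ)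
    {ψ : MulAut G} (hψ : ∀ g, η (ψ g) = η g) (hf : IsTwoCocycle η f) :
    cocycleClass hσ hgen ⟨fun g h => f (ψ g) (ψ h), hf.comp ψ hψ⟩ =
      cocycleClass hσ hgen ⟨f, hf⟩ ^ powIndex σ (ψ σ) := by
  set c := stdCocycle σ (sigmaProd σ (orderOf σ) f)
  have hcob : IsTwoCoboundary η fun g h => f (ψ g) (ψ h) * (c (ψ g) (ψ h))⁻¹ :=
    (hf.cohomologous_stdCocycle hσ hgen).comp ψ hψ
  have hc : sigmaProd σ (orderOf σ) (fun g h => c (ψ g) (ψ h)) =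
      sigmaProd σ (orderOf σ) f ^ powIndex σ (ψ σ) :=
    (prod_range_orderOf_comp_equiv hσ hgen ψ.toEquiv (fun g => c g (ψ σ))).trans
      (prod_stdCocycle hσ _ _)
  have hmem := sigmaProd_mem_range_of_isTwoCoboundary hσ hgen hcob
  change sigmaProd σ (orderOf σ)
    ((fun g h => f (ψ g) (ψ h)) * (fun g h => c (ψ g) (ψ h))⁻¹) ∈ _ at hmem
  rw [map_mul, map_inv, hc] at hmem
  rw [← map_pow, cocycleClass, MonoidHom.comp_apply, MonoidHom.comp_apply,
    QuotientGroup.mk'_apply, QuotientGroup.mk'_apply, QuotientGroup.eq_iff_div_mem,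
    Subgroup.mem_subgroupOf]
  simpa [div_eq_mul_inv] using hmem

theorem powIndex_modEq_one (hσ : IsOfFinOrder σ) (hgen : ∀ g : G, g ∈ Subgroup.zpowers σ)
    {g : G} (hg : η g = η σ) : powIndex σ g ≡ 1 [MOD orderOf (η σ)] :=
  pow_eq_pow_iff_modEq.mp (by rw [pow_one, ← map_pow, pow_powIndex hσ (hgen g), hg])

theorem cohomologous_comp_mulAut (hσ : IsOfFinOrder σ) (hgen : ∀ g : G, g ∈ Subgroup.zpowers σ)
    {ψ : MulAut G} (hψ : ∀ g, η (ψ g) = η g)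
    (hu : powIndex σ (ψ σ) ≡ 1 [MOD Nat.card (TateH0 η σ)]) (hf : IsTwoCocycle η f) :
    Cohomologous η (fun g h => f (ψ g) (ψ h)) f := by
  have hdvd : orderOf (cocycleClass hσ hgen ⟨f, hf⟩) ∣ Nat.card (TateH0 η σ) :=
    orderOf_dvd_natCard _
  refine (cocycleClass_eq_iff hσ hgen ⟨_, hf.comp ψ hψ⟩ ⟨f, hf⟩).mp ?_
  calc _ = cocycleClass hσ hgen ⟨f, hf⟩ ^ powIndex σ (ψ σ) := cocycleClass_comp_mulAut hσ hgen hψ hf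
    _ = cocycleClass hσ hgen ⟨f, hf⟩ ^ 1 := by
      rw [← pow_mod_orderOf, hu.of_dvd hdvd, pow_mod_orderOf]
    _ = _ := pow_one _

theorem card_quot_pullbackRel
    (h : ∀ ψ : MulAut G, (∀ g, η (ψ g) = η g) → ∀ f : G → G → Fˣ, IsTwoCocycle η f →
      Cohomologous η (fun g g' => f (ψ g) (ψ g')) f) :
    Nat.card (Quot (pullbackRel η)) = Nat.card (H2 η) := by
  refine Nat.card_quot_of_forall_rel_eq ?_
  rintro _ _ ⟨ψ, hψ, f, hf, hf', rfl, rfl⟩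
  symm
  rw [QuotientGroup.eq_iff_div_mem, Subgroup.mem_subgroupOf]
  exact h ψ hψ f hf

end TateH0

theorem IsCyclic.range_powMonoidHom_eq_ker {H : Type*} [CommGroup H] [IsCyclic H] [Finite H]
    {d e : ℕ} (h : d * e = Nat.card H) :
    (powMonoidHom e : H →* H).range = (powMonoidHom d).ker := by
  have he : e ≠ 0 := by
    rintro rfl
    exact (Nat.card_pos (α := H)).ne (by simpa using h)
  refine Subgroup.eq_of_le_of_card_ge ?_ ?_
  · rintro _ ⟨x, rfl⟩
    rw [MonoidHom.mem_ker, powMonoidHom_apply, powMonoidHom_apply, ← pow_mul, mul_comm, h,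
      pow_card_eq_one']
  · rw [IsCyclic.card_powMonoidHom_ker, IsCyclic.card_powMonoidHom_range, ← h,
      Nat.gcd_mul_right_left, Nat.gcd_mul_left_left, Nat.mul_div_cancel _ (Nat.pos_of_ne_zero he)]

section FiniteField

variable {G F : Type*} [Group G] [Field F] {η : G →* RingAut F} {σ : G} {p s : ℕ}

theorem Fintype.one_lt_of_card_eq_pow {α : Type*} [Fintype α] [Nontrivial α] {p s : ℕ}
    (h : Fintype.card α = p ^ s) : 1 < p := by
  have h1 := h ▸ Fintype.one_lt_card (α := α)
  contrapose! h1
  exact pow_le_one₀ (Nat.zero_le p) h1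

theorem dvd_of_forall_pow_pow_eq_self [Fintype F] (hF : Fintype.card F = p ^ s) {j : ℕ}
    (h : ∀ x : F, x ^ p ^ j = x) : s ∣ j := by
  classical
  have hp := Fintype.one_lt_of_card_eq_pow hF
  have hdvd : p ^ s - 1 ∣ p ^ j - 1 := by
    rw [← hF, ← Fintype.card_units, ← Nat.card_eq_fintype_card, ← IsCyclic.exponent_eq_card]
    refine Monoid.exponent_dvd_of_forall_pow_eq_one fun x => ?_
    have hx : x ^ (p ^ j - 1) * x = 1 * x := by
      rw [pow_sub_one_mul (pow_ne_zero j (by omega)), one_mul]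
      exact Units.ext (by simpa using h x)
    exact mul_right_cancel hx
  have hgcd := Nat.pow_sub_one_gcd_pow_sub_one p s j
  rw [Nat.gcd_eq_left hdvd] at hgcd
  have h1 := Nat.one_le_pow s p (by omega)
  have h2 := Nat.one_le_pow (Nat.gcd s j) p (by omega)
  have hs : s = Nat.gcd s j := Nat.pow_right_injective hp (by simp only; omega)
  exact hs ▸ Nat.gcd_dvd_right s j

theorem pow_apply_eq_pow_pow (hη : ∀ x : F, η σ x = x ^ p) (j : ℕ) (x : F) :
    η (σ ^ j) x = x ^ p ^ j := by
  induction j with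
  | zero => simp
  | succ j ih => rw [pow_succ, map_mul, RingAut.mul_apply, hη, map_pow, ih, ← pow_mul, ← pow_succ]

theorem unitsAct_pow_apply (hη : ∀ x : F, η σ x = x ^ p) (j : ℕ) (x : Fˣ) :
    unitsAct η (σ ^ j) x = x ^ p ^ j :=
  Units.ext (by rw [val_unitsAct, pow_apply_eq_pow_pow hη, Units.val_pow_eq_pow_val])

theorem dvd_orderOf_of_card_eq_pow [Fintype F] (hF : Fintype.card F = p ^ s)
    (hη : ∀ x : F, η σ x = x ^ p) : s ∣ orderOf (η σ) :=
  dvd_of_forall_pow_pow_eq_self hF fun x => by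
    rw [← pow_apply_eq_pow_pow hη, map_pow, pow_orderOf_eq_one, RingAut.one_apply]

theorem fixedUnits_eq_ker_powMonoidHom (hgen : ∀ g : G, g ∈ Subgroup.zpowers σ)
    (hη : ∀ x : F, η σ x = x ^ p) (hp : p ≠ 0) :
    fixedUnits η = (powMonoidHom (p - 1) : Fˣ →* Fˣ).ker := by
  ext x
  rw [mem_fixedUnits_iff hgen, MonoidHom.mem_ker, powMonoidHom_apply, ← pow_one σ,
    unitsAct_pow_apply hη, pow_one, ← pow_sub_one_mul hp, mul_eq_right]

theorem cyclicNormHom_mul_apply (h : η (σ ^ s) = 1) (t : ℕ) (x : Fˣ) :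
    cyclicNormHom η σ (s * t) x = cyclicNormHom η σ s x ^ t := by
  induction t with
  | zero => simp [cyclicNormHom_apply]
  | succ t ih =>
    have hs : unitsAct η (σ ^ s) = 1 := by
      ext y
      rw [val_unitsAct, h, RingAut.one_apply]
      rfl
    have h1 : unitsAct η (σ ^ (s * t)) = 1 := by rw [pow_mul, map_pow, hs, one_pow]
    rw [Nat.mul_succ, cyclicNormHom_add, ih, h1, Monoid.End.coe_one, id_eq, pow_succ]

theorem cyclicNormHom_range_eq_fixedUnits [Fintype F] (hF : Fintype.card F = p ^ s)
    (hη : ∀ x : F, η σ x = x ^ p) (hgen : ∀ g : G, g ∈ Subgroup.zpowers σ) :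
    (cyclicNormHom η σ s).range = fixedUnits η := by
  classical
  have hp := Fintype.one_lt_of_card_eq_pow hF
  have hN : cyclicNormHom η σ s = powMonoidHom (∑ i ∈ range s, p ^ i) := by
    ext x
    simp only [cyclicNormHom_apply, unitsAct_pow_apply hη, prod_pow_eq_pow_sum, powMonoidHom_apply]
  rw [hN, fixedUnits_eq_ker_powMonoidHom hgen hη (by omega), IsCyclic.range_powMonoidHom_eq_ker]
  rw [Nat.card_eq_fintype_card, Fintype.card_units, hF, Nat.geomSum_eq hp,
    Nat.mul_div_cancel' (Nat.sub_one_dvd_pow_sub_one p s)]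

theorem card_tateH0 [Fintype F] (hF : Fintype.card F = p ^ s) (hη : ∀ x : F, η σ x = x ^ p)
    (hgen : ∀ g : G, g ∈ Subgroup.zpowers σ) (hs : s ∣ orderOf σ) :
    Nat.card (TateH0 η σ) = Nat.gcd (p - 1) (orderOf σ / s) := by
  classical
  have hp := Fintype.one_lt_of_card_eq_pow hF
  have hs0 : s ≠ 0 := by
    rintro rfl
    have h1 := Fintype.one_lt_card (α := F)
    rw [hF, pow_zero] at h1
    exact lt_irrefl 1 h1
  obtain ⟨t, ht⟩ := hs
  have hσs : η (σ ^ s) = 1 := RingEquiv.ext fun x => by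
    rw [pow_apply_eq_pow_pow hη, ← hF, FiniteField.pow_card, RingAut.one_apply]
  have hrange : (cyclicNormHom η σ (orderOf σ)).range.subgroupOf (fixedUnits η) =
      (powMonoidHom t : fixedUnits η →* fixedUnits η).range := by
    have hNs := cyclicNormHom_range_eq_fixedUnits hF hη hgen
    ext y
    rw [Subgroup.mem_subgroupOf, ht]
    constructor
    · rintro ⟨x, hx⟩
      refine ⟨⟨cyclicNormHom η σ s x, hNs ▸ ⟨x, rfl⟩⟩, Subtype.ext ?_⟩
      rw [← hx, cyclicNormHom_mul_apply hσs]
      rfl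
    · rintro ⟨⟨z, hz⟩, rfl⟩
      obtain ⟨x, rfl⟩ := hNs ▸ hz
      exact ⟨x, cyclicNormHom_mul_apply hσs t x⟩
  rw [ht, Nat.mul_div_cancel_left t (Nat.pos_of_ne_zero hs0)]
  change ((cyclicNormHom η σ (orderOf σ)).range.subgroupOf (fixedUnits η)).index = _
  rw [hrange, IsCyclic.index_powMonoidHom_range, fixedUnits_eq_ker_powMonoidHom hgen hη (by omega),
    IsCyclic.card_powMonoidHom_ker, Nat.card_eq_fintype_card, Fintype.card_units, hF,
    Nat.gcd_eq_right (Nat.sub_one_dvd_pow_sub_one p s)]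

end FiniteField

theorem compat_acts_trivially_of_dvd_general {G F : Type*} [Group G] [Field F] [Fintype F]
    (q r k n : ℕ) (hk : 0 < k) (hn : 0 < n)
    (hkr : k ∣ r) (hrkn : r / k ∣ n)
    (hF : Fintype.card F = q ^ r)
    (σ : G) (hgen : ∀ g : G, g ∈ Subgroup.zpowers σ) (hord : orderOf σ = n)
    (η : G →* RingAut F) (hη : ∀ x : F, η σ x = x ^ q ^ k)
    (hm : Nat.gcd (q ^ k - 1) (n * k / r) ∣ r / k) :
    (∀ ψ : MulAut G, (∀ g : G, η (ψ g) = η g) →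
      ∀ f : G → G → Fˣ, IsTwoCocycle η f →
        Cohomologous η (fun g g' => f (ψ g) (ψ g')) f) ∧
    Nat.card (Quot (pullbackRel η)) = Nat.gcd (q ^ k - 1) (n * k / r) := by
  subst hord
  obtain ⟨s, rfl⟩ := hkr
  have hσ : IsOfFinOrder σ := orderOf_pos_iff.mp hn
  rw [Nat.mul_div_cancel_left s hk] at hrkn hm
  rw [mul_comm _ k, Nat.mul_div_mul_left _ _ hk] at hm ⊢
  rw [pow_mul] at hF
  have hcard := card_tateH0 hF hη hgen hrkn
  have hact : ∀ ψ : MulAut G, (∀ g : G, η (ψ g) = η g) →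
      ∀ f : G → G → Fˣ, IsTwoCocycle η f → Cohomologous η (fun g g' => f (ψ g) (ψ g')) f :=
    fun ψ hψ f hf => cohomologous_comp_mulAut hσ hgen hψ
      ((powIndex_modEq_one hσ hgen (hψ σ)).of_dvd
        ((hcard ▸ hm).trans (dvd_orderOf_of_card_eq_pow hF hη))) hf
  exact ⟨hact, by rw [card_quot_pullbackRel hact, card_H2_eq_card_tateH0 hσ hgen, hcard]⟩

/-- let the cyclic group `C_n = ⟨σ⟩` act on `F = F_{q^r}` via
`η(σ) = φ^k` and set `m = gcd(q^k - 1, nk/r)`. If `m ∣ r/k`, then every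
`η`-compatible automorphism of `C_n` acts trivially on `H²_η(C_n, F^*)` (every
pullback of a 2-cocycle is cohomologous to the original), hence the number of orbits
of the pullback `Aut_η(C_n)`-action on `H²_η(C_n, F^*)` equals `m`. -/
theorem compat_acts_trivially_of_dvd {G F : Type*} [Group G] [Field F] [Fintype F]
    (q r k n : ℕ) (hq : q.Prime) (hr : 0 < r) (hk : 0 < k) (hn : 0 < n)
    (hkr : k ∣ r) (hrkn : r / k ∣ n)
    (hF : Fintype.card F = q ^ r)
    (σ : G) (hgen : ∀ g : G, g ∈ Subgroup.zpowers σ) (hord : orderOf σ = n)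
    (η : G →* RingAut F) (hη : ∀ x : F, η σ x = x ^ q ^ k)
    (hm : Nat.gcd (q ^ k - 1) (n * k / r) ∣ r / k) :
    (∀ ψ : MulAut G, (∀ g : G, η (ψ g) = η g) →
      ∀ f : G → G → Fˣ, IsTwoCocycle η f →
        Cohomologous η (fun g g' => f (ψ g) (ψ g')) f) ∧
    Nat.card (Quot (pullbackRel η)) = Nat.gcd (q ^ k - 1) (n * k / r) :=
  compat_acts_trivially_of_dvd_general q r k n hk hn hkr hrkn hF σ hgen hord η hη hm
end
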